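/- The reduction relation of SK-combinatory logic is confluent (Church–Rosser): if t ⟶* u and t ⟶* v then there exists w with u ⟶* w and v ⟶* w. -/

import Mathlib

/-!
Parallel reduction, which contracts any set of redexes of a term at once, lies between one-step
reduction and `⟶*`, so its reflexive-transitive closure is `⟶*`. It has the triangle property
(Takahashi): whenever `t` reduces in parallel to `u`, `u` reduces in parallel to the complete
development of `t`, obtained by contracting all redexes of `t` simultaneously. Hence parallel
reduction has the diamond property, and confluence follows by tiling.
-/

inductive Term : Type
  | S : Term
  | K : Term
  | app : Term → Term → Term
deriving DecidableEq

inductive Step : Term → Term → Prop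
  | Srule (a b c : Term) :
      Step (.app (.app (.app .S a) b) c) (.app (.app a c) (.app b c))
  | Krule (a b : Term) : Step (.app (.app .K a) b) a
  | appL {a a' : Term} (b : Term) : Step a a' → Step (.app a b) (.app a' b)
  | appR (a : Term) {b b' : Term} : Step b b' → Step (.app a b) (.app a b')

def Reds : Term → Term → Prop := Relation.ReflTransGen Step

open Relation

namespace Term

def develop : Term → Term
  | app (app (app S a) b) c => app (app a.develop c.develop) (app b.develop c.develop)
  | app (app K a) _ => a.develop
  | app a b => app a.develop b.develop
  | S => S
  | K => K

end Term

inductive ParStep : Term → Term → Prop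
  | S : ParStep .S .S
  | K : ParStep .K .K
  | app {a a' b b' : Term} : ParStep a a' → ParStep b b' → ParStep (.app a b) (.app a' b')
  | Srule {a a' b b' c c' : Term} : ParStep a a' → ParStep b b' → ParStep c c' →
      ParStep (.app (.app (.app .S a) b) c) (.app (.app a' c') (.app b' c'))
  | Krule {a a' : Term} (b : Term) : ParStep a a' → ParStep (.app (.app .K a) b) a'

theorem Reds.app {a a' b b' : Term} (ha : Reds a a') (hb : Reds b b') :
    Reds (.app a b) (.app a' b') :=
  (ha.lift (Term.app · b) fun _ _ ↦ Step.appL b).trans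
    (hb.lift (Term.app a') fun _ _ ↦ Step.appR a')

namespace ParStep

protected theorem refl : ∀ t : Term, ParStep t t
  | .S => .S
  | .K => .K
  | .app a b => .app (ParStep.refl a) (ParStep.refl b)

theorem of_step {t u : Term} (h : Step t u) : ParStep t u := by
  induction h with
  | Srule a b c => exact .Srule (.refl a) (.refl b) (.refl c)
  | Krule a b => exact .Krule b (.refl a)
  | appL b _ ih => exact .app ih (.refl b)
  | appR a _ ih => exact .app (.refl a) ih

theorem reds {t u : Term} (h : ParStep t u) : Reds t u := by
  induction h with
  | S | K => exact .refl
  | app _ _ iha ihb => exact iha.app ihb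
  | Srule _ _ _ iha ihb ihc =>
    exact ReflTransGen.tail (((Reds.app .refl iha).app ihb).app ihc) (.Srule _ _ _)
  | Krule b _ iha => exact iha.head (.Krule _ _)

theorem app_app_S_inv {x y z : Term} (h : ParStep (.app (.app .S x) y) z) :
    ∃ x' y', z = .app (.app .S x') y' ∧ ParStep x x' ∧ ParStep y y' := by
  rcases h with _ | _ | ⟨_ | _ | ⟨⟨⟩, hx⟩, hy⟩
  exact ⟨_, _, rfl, hx, hy⟩

theorem app_K_inv {x z : Term} (h : ParStep (.app .K x) z) :
    ∃ x', z = .app .K x' ∧ ParStep x x' := by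
  rcases h with _ | _ | ⟨⟨⟩, hx⟩
  exact ⟨_, rfl, hx⟩

theorem to_develop {t u : Term} (h : ParStep t u) : ParStep u t.develop := by
  induction h with
  | S => exact .S
  | K => exact .K
  | Srule _ _ _ iha ihb ihc => exact .app (.app iha ihc) (.app ihb ihc)
  | Krule _ _ iha => exact iha
  | @app a _ _ _ ha _ iha ihb =>
    -- `develop` contracts `a b` itself when `a` is `S x y` or `K x`, and `a'` keeps that shape.
    match a, ha, iha with
    | .app (.app .S x) y, ha, iha =>
      obtain ⟨x', y', rfl, -, -⟩ := ha.app_app_S_inv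
      obtain ⟨_, _, he, hx, hy⟩ := iha.app_app_S_inv
      cases he
      exact .Srule hx hy ihb
    | .app .K x, ha, iha =>
      obtain ⟨x', rfl, -⟩ := ha.app_K_inv
      obtain ⟨_, he, hx⟩ := iha.app_K_inv
      cases he
      exact .Krule _ hx
    | .S, _, iha | .K, _, iha | .app .S _, _, iha | .app (.app .K _) _, _, iha
    | .app (.app (.app _ _) _) _, _, iha => exact .app iha ihb

theorem diamond {t u v : Term} (hu : ParStep t u) (hv : ParStep t v) :
    ∃ w, ParStep u w ∧ ParStep v w :=
  ⟨t.develop, hu.to_develop, hv.to_develop⟩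

end ParStep

theorem reflTransGen_parStep_eq_reds : ReflTransGen ParStep = Reds :=
  le_antisymm (reflTransGen_closed fun _ _ ↦ ParStep.reds)
    (ReflTransGen.mono fun _ _ ↦ ParStep.of_step)

theorem church_rosser {t u v : Term} (hu : Reds t u) (hv : Reds t v) :
    ∃ w : Term, Reds u w ∧ Reds v w := by
  rw [← reflTransGen_parStep_eq_reds] at hu hv ⊢
  refine Relation.church_rosser (fun _ _ _ hab hac ↦ ?_) hu hv
  obtain ⟨d, hbd, hcd⟩ := ParStep.diamond hab hac
  exact ⟨d, .single hbd, .single hcd⟩
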